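/- (Theorem 4.1, case γ = 1: convergence of the one-dimensional implicit scheme.) Let α ∈ (1,2], integers N ≥ 2 and N_t ≥ 1, reals τ > 0 and Δx > 0, nonnegative reals c_{i,k} (1 ≤ i ≤ N-1, 1 ≤ k ≤ N_t), and set ω_{i,k} = -τ·κ_α·c_{i,k}/(Γ(4-α)·(Δx)^α) ≥ 0. Let R^k_i (1 ≤ i ≤ N-1, 1 ≤ k ≤ N_t) be reals and R_max = max_{i,k} |R^k_i|. Suppose real numbers ε^k_i satisfy ε^0_i = 0 for all i, ε^k_0 = ε^k_N = 0 for 1 ≤ k ≤ N_t, and for all 1 ≤ i ≤ N-1, 0 ≤ k ≤ N_t - 1: (1 - ω_{i,k+1}·g^{α,N}_{i,i})·ε^{k+1}_i - ω_{i,k+1}·Σ_{m=0, m≠i}^{N} g^{α,N}_{i,m}·ε^{k+1}_m = ε^k_i + R^{k+1}_i. Then for every 0 ≤ k ≤ N_t: max_{0≤i≤N} |ε^k_i| ≤ k·R_max. In particular, if T > 0, N_t·τ ≤ T and |R^k_i| ≤ C·τ·(τ + (Δx)^2) for all i, k, then max_{0≤i≤N} |ε^k_i| ≤ C·T·(τ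 + (Δx)^2) for all k. -/

import Mathlib

/-- The coefficients `a^ν_{j,m}` of the second-order discretization of the left
Riemann–Liouville fractional derivative. All powers are real powers. -/
noncomputable def aCoef (ν : ℝ) (j m : ℕ) : ℝ :=
  if m = j then 1
  else if m = 0 then ((j : ℝ) - 1) ^ (3 - ν) - (j : ℝ) ^ (2 - ν) * ((j : ℝ) - 3 + ν)
  else ((j : ℝ) - (m : ℝ) + 1) ^ (3 - ν) - 2 * ((j : ℝ) - (m : ℝ)) ^ (3 - ν)
    + ((j : ℝ) - (m : ℝ) - 1) ^ (3 - ν)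

/-- The coefficients `b^ν_{j,m}` of the second-order discretization of the right
Riemann–Liouville fractional derivative on a grid with `N` subintervals. -/
noncomputable def bCoef (ν : ℝ) (N j m : ℕ) : ℝ :=
  if m = j then 1
  else if m = N then (3 - ν - (N : ℝ) + (j : ℝ)) * ((N : ℝ) - (j : ℝ)) ^ (2 - ν)
    + ((N : ℝ) - (j : ℝ) - 1) ^ (3 - ν)
  else ((m : ℝ) - (j : ℝ) + 1) ^ (3 - ν) - 2 * ((m : ℝ) - (j : ℝ)) ^ (3 - ν)
    + ((m : ℝ) - (j : ℝ) - 1) ^ (3 - ν)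

/-- The coefficients `p^ν_{i,m}` (left-derivative part), for `1 ≤ i ≤ N-1`. -/
noncomputable def pCoef (ν : ℝ) (i m : ℕ) : ℝ :=
  if m < i then aCoef ν (i - 1) m - 2 * aCoef ν i m + aCoef ν (i + 1) m
  else if m = i then -2 * aCoef ν i i + aCoef ν (i + 1) i
  else if m = i + 1 then aCoef ν (i + 1) (i + 1)
  else 0

/-- The coefficients `q^ν_{i,m}` (right-derivative part), for `1 ≤ i ≤ N-1`. -/
noncomputable def qCoef (ν : ℝ) (N i m : ℕ) : ℝ :=
  if m + 1 < i then 0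
  else if m + 1 = i then bCoef ν N (i - 1) (i - 1)
  else if m = i then -2 * bCoef ν N i i + bCoef ν N (i - 1) i
  else bCoef ν N (i - 1) m - 2 * bCoef ν N i m + bCoef ν N (i + 1) m

/-- The Riesz-derivative difference coefficients `g^{ν,N}_{i,m} = p^ν_{i,m} + q^ν_{i,m}`. -/
noncomputable def gCoef (ν : ℝ) (N i m : ℕ) : ℝ := pCoef ν i m + qCoef ν N i m

/-- The L1 coefficients `l_s = (s+1)^(1-γ) - s^(1-γ)` of the Caputo discretization. -/
noncomputable def lCoef (γ : ℝ) (s : ℕ) : ℝ := ((s : ℝ) + 1) ^ (1 - γ) - (s : ℝ) ^ (1 - γ)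

/-- The Riesz constant `κ_ν = 1 / (2 cos(νπ/2))`. -/
noncomputable def kappa (ν : ℝ) : ℝ := 1 / (2 * Real.cos (ν * Real.pi / 2))

/-- The maximum of `|v i|` over `0 ≤ i ≤ N`. -/
noncomputable def maxAbs (N : ℕ) (v : ℕ → ℝ) : ℝ :=
  (Finset.range (N + 1)).sup' Finset.nonempty_range_add_one fun i => |v i|

/-- The maximum of `|v i j|` over `0 ≤ i ≤ Nx`, `0 ≤ j ≤ Ny`. -/
noncomputable def maxAbs2 (Nx Ny : ℕ) (v : ℕ → ℕ → ℝ) : ℝ :=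
  ((Finset.range (Nx + 1)) ×ˢ (Finset.range (Ny + 1))).sup'
    (Finset.nonempty_range_add_one.product Finset.nonempty_range_add_one) fun p => |v p.1 p.2|

/-!
Write `s = 3 - α ∈ [1, 2)` and `φ = Δ²(x ↦ x ^ s)`. Off the diagonal the coefficients `aCoef`,
`bCoef` are values of `φ`, so for interior `m ≠ i` the coefficient `gCoef α N i m` is the second
difference `Δ²u (|i - m| - 1)` of the sequence `u = (2, φ 0, φ 1, …)`, while
`gCoef α N i i = 2 Δu 0`. The function `φ` is decreasing and convex on `[0, ∞)`: its derivatives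
are second differences of the concave `x ^ (s - 1)` and of the convex `x ^ (s - 2)`. Together
with `3 ^ s - 4 · 2 ^ s + 7 ≥ 0` this makes every `Δ²u` nonnegative and `Δu` nonpositive, so the
off-diagonal coefficients are nonnegative and, by telescoping, each of their row sums is at most
`-gCoef α N i i`. Since `ω ≥ 0`, the matrix of the implicit scheme is then diagonally dominant,
and evaluating the scheme at an index where `|ε (k + 1)|` is maximal gives
`max |ε (k + 1)| ≤ max |ε k| + Rmax`; induction on `k` concludes.
-/

open Set fwdDiff

lemma fwdDiff_iter_two_apply {M : Type*} [AddCommMonoid M] (h : M) (f : M → ℝ) (x : M) :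
    Δ_[h] ^[2] f x = f (x + h + h) - 2 * f (x + h) + f x := by
  simp only [Function.iterate_succ, Function.iterate_zero, Function.comp_apply, id_eq, fwdDiff]
  ring

lemma Continuous.fwdDiff_iter {f : ℝ → ℝ} (hf : Continuous f) (h : ℝ) (n : ℕ) :
    Continuous (Δ_[h] ^[n] f) := by
  induction n with
  | zero => exact hf
  | succ n ih =>
    rw [Function.iterate_succ_apply']
    exact (ih.comp (continuous_add_const h)).sub ih

lemma hasDerivAt_fwdDiff_iter {f f' : ℝ → ℝ} {a h : ℝ} (hh : 0 ≤ h)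
    (hf : ∀ x, a < x → HasDerivAt f (f' x) x) (n : ℕ) :
    ∀ x, a < x → HasDerivAt (Δ_[h] ^[n] f) (Δ_[h] ^[n] f' x) x := by
  induction n with
  | zero => exact hf
  | succ n ih =>
    intro x hx
    simp only [Function.iterate_succ_apply']
    exact ((ih (x + h) (by linarith)).comp_add_const x h).sub (ih x hx)

lemma ConcaveOn.fwdDiff_iter_two_nonpos {S : Set ℝ} {f : ℝ → ℝ} (hf : ConcaveOn ℝ S f)
    {x h : ℝ} (hx : x ∈ S) (hxh : x + h + h ∈ S) : Δ_[h] ^[2] f x ≤ 0 := by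
  have hmid := hf.2 hx hxh (by norm_num : (0:ℝ) ≤ 1 / 2) (by norm_num : (0:ℝ) ≤ 1 / 2)
    (by norm_num)
  simp only [smul_eq_mul, show 1 / 2 * x + 1 / 2 * (x + h + h) = x + h by ring] at hmid
  rw [fwdDiff_iter_two_apply]
  linarith

lemma fwdDiff_iter_two_rpow_nonneg {p x h : ℝ} (hp : p ≤ 0) (hx : 0 < x) (hh : 0 ≤ h) :
    0 ≤ Δ_[h] ^[2] (fun y : ℝ => y ^ p) x := by
  rw [fwdDiff_iter_two_apply]
  have hx2 : 0 < x + h + h := by linarith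
  have hgm : (x + h) ^ p * (x + h) ^ p ≤ (x + h + h) ^ p * x ^ p := by
    rw [← Real.mul_rpow (by linarith) (by linarith), ← Real.mul_rpow hx2.le hx.le]
    exact Real.rpow_le_rpow_of_nonpos (by positivity) (by nlinarith) hp
  have ha := Real.rpow_pos_of_pos hx p
  have hb := Real.rpow_pos_of_pos hx2 p
  have hc := Real.rpow_pos_of_pos (show 0 < x + h by linarith) p
  -- AM-GM: `a + b ≥ 2 √(a b) ≥ 2 c` for `a = (x + 2h) ^ p`, `b = x ^ p`, `c = (x + h) ^ p`
  nlinarith [sq_nonneg ((x + h + h) ^ p - x ^ p),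
    sq_nonneg ((x + h + h) ^ p + x ^ p - 2 * (x + h) ^ p)]

lemma three_rpow_sub_four_mul_two_rpow_add_seven_nonneg {s : ℝ} (hs : s ≤ 2) :
    0 ≤ (3 : ℝ) ^ s - 4 * 2 ^ s + 7 := by
  set p := s - 2
  have hp : p ≤ 0 := by simp only [p]; linarith
  have h3 : (3 : ℝ) ^ s = 9 * 3 ^ p := by
    rw [show s = 2 + p by ring, Real.rpow_add (by norm_num)]; norm_num
  have h2 : (2 : ℝ) ^ s = 4 * 2 ^ p := by
    rw [show s = 2 + p by ring, Real.rpow_add (by norm_num)]; norm_num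
  have hbase : (3 : ℝ) ^ (9 / 16 : ℝ) ≤ 2 := by
    rw [show (2 : ℝ) = ((2 : ℝ) ^ (16 : ℕ)) ^ (1 / 16 : ℝ) by
          rw [← Real.rpow_natCast, ← Real.rpow_mul (by norm_num)]; norm_num,
      show (9 / 16 : ℝ) = (9 : ℕ) * (1 / 16) by norm_num, Real.rpow_mul (by norm_num),
      Real.rpow_natCast]
    exact Real.rpow_le_rpow (by positivity) (by norm_num) (by norm_num)
  -- weighted AM-GM `3^(9p/16) ≤ (9·3^p + 7)/16`, then `2 ≥ 3^(9/16)`, i.e. `2^16 ≥ 3^9`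
  have hamgm := Real.geom_mean_le_arith_mean2_weighted (w₁ := 9 / 16) (w₂ := 7 / 16)
    (p₁ := 3 ^ p) (p₂ := 1) (by norm_num) (by norm_num) (by positivity) (by norm_num) (by norm_num)
  have hpow : (2 : ℝ) ^ p ≤ ((3 : ℝ) ^ p) ^ (9 / 16 : ℝ) := by
    rw [← Real.rpow_mul (by norm_num), mul_comm, Real.rpow_mul (by norm_num)]
    exact Real.rpow_le_rpow_of_nonpos (by positivity) hbase hp
  rw [Real.one_rpow, mul_one] at hamgm
  rw [h3, h2]
  linarith

lemma antitoneOn_fwdDiff_iter_two_rpow {s : ℝ} (hs1 : 1 ≤ s) (hs2 : s ≤ 2) :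
    AntitoneOn (Δ_[1] ^[2] fun x : ℝ => x ^ s) (Ici 0) := by
  have hderiv := hasDerivAt_fwdDiff_iter zero_le_one
    (fun x (hx : 0 < x) => Real.hasDerivAt_rpow_const (p := s) (Or.inl hx.ne')) 2
  refine antitoneOn_of_hasDerivWithinAt_nonpos (convex_Ici 0)
    ((Real.continuous_rpow_const (by linarith)).fwdDiff_iter 1 2).continuousOn
    (fun x hx => (hderiv x (by simpa using hx)).hasDerivWithinAt) fun x hx => ?_
  rw [interior_Ici, mem_Ioi] at hx
  have hconc : ConcaveOn ℝ (Ici 0) fun y : ℝ => s * y ^ (s - 1) :=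
    (Real.concaveOn_rpow (by linarith) (by linarith)).smul (by linarith)
  exact hconc.fwdDiff_iter_two_nonpos hx.le (by simp only [mem_Ici]; linarith)

lemma convexOn_fwdDiff_iter_two_rpow {s : ℝ} (hs1 : 1 ≤ s) (hs2 : s ≤ 2) :
    ConvexOn ℝ (Ici 0) (Δ_[1] ^[2] fun x : ℝ => x ^ s) := by
  have hderiv := hasDerivAt_fwdDiff_iter zero_le_one
    (fun x (hx : 0 < x) => Real.hasDerivAt_rpow_const (p := s) (Or.inl hx.ne')) 2
  have hderiv2 := hasDerivAt_fwdDiff_iter zero_le_one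
    (f' := fun y => s * ((s - 1) * y ^ (s - 2)))
    (fun x (hx : 0 < x) => by
      simpa only [sub_sub, one_add_one_eq_two] using
        (Real.hasDerivAt_rpow_const (p := s - 1) (Or.inl hx.ne')).const_mul s) 2
  refine convexOn_of_hasDerivWithinAt2_nonneg (convex_Ici 0)
    ((Real.continuous_rpow_const (by linarith)).fwdDiff_iter 1 2).continuousOn
    (fun x hx => (hderiv x (by simpa using hx)).hasDerivWithinAt)
    (fun x hx => (hderiv2 x (by simpa using hx)).hasDerivWithinAt) fun x hx => ?_
  rw [interior_Ici, mem_Ioi] at hx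
  have hsmul : (fun y : ℝ => s * ((s - 1) * y ^ (s - 2)))
      = (s * (s - 1)) • fun y : ℝ => y ^ (s - 2) := by
    ext y; simp only [Pi.smul_apply, smul_eq_mul]; ring
  rw [hsmul, fwdDiff_iter_const_smul, Pi.smul_apply, smul_eq_mul]
  exact mul_nonneg (by nlinarith) (fwdDiff_iter_two_rpow_nonneg (by linarith) hx zero_le_one)

/-- The value `2` at `0` makes `gCoef` a second difference of this sequence also next to the
diagonal, where `aCoef` and `bCoef` equal `1`. -/
noncomputable def rieszProfile (s : ℝ) : ℕ → ℝ
  | 0 => 2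
  | n + 1 => (Δ_[1] ^[2] fun x : ℝ => x ^ s) n

section RieszProfile

variable {s : ℝ}

lemma rieszProfile_one (hs : 0 < s) : rieszProfile s 1 = 2 ^ s - 2 := by
  simp only [rieszProfile, fwdDiff_iter_two_apply, Nat.cast_zero]
  norm_num [Real.zero_rpow hs.ne']

lemma fwdDiff_rieszProfile_nonpos (hs1 : 1 ≤ s) (hs2 : s ≤ 2) (n : ℕ) :
    Δ_[1] (rieszProfile s) n ≤ 0 := by
  rw [fwdDiff, sub_nonpos]
  cases n with
  | zero =>
    have h4 : (2 : ℝ) ^ s ≤ 2 ^ (2 : ℝ) := Real.rpow_le_rpow_of_exponent_le (by norm_num) hs2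
    rw [Real.rpow_two] at h4
    rw [zero_add, rieszProfile_one (by linarith)]
    show (2 : ℝ) ^ s - 2 ≤ 2
    linarith
  | succ n =>
    exact antitoneOn_fwdDiff_iter_two_rpow hs1 hs2 (by simp) (by simp; positivity) (by simp)

lemma fwdDiff_iter_two_rieszProfile_nonneg (hs1 : 1 ≤ s) (hs2 : s ≤ 2) (n : ℕ) :
    0 ≤ Δ_[1] ^[2] (rieszProfile s) n := by
  rw [fwdDiff_iter_two_apply]
  cases n with
  | zero =>
    simp only [rieszProfile, fwdDiff_iter_two_apply, zero_add, Nat.cast_one, Nat.cast_zero]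
    norm_num [Real.zero_rpow (show s ≠ 0 by linarith)]
    linarith [three_rpow_sub_four_mul_two_rpow_add_seven_nonneg hs2]
  | succ n =>
    have hconv := (convexOn_fwdDiff_iter_two_rpow hs1 hs2).2 (x := (n : ℝ)) (y := n + 2)
      (by simp) (by simp; positivity) (by norm_num : (0:ℝ) ≤ 1 / 2)
      (by norm_num : (0:ℝ) ≤ 1 / 2) (by norm_num)
    simp only [smul_eq_mul, show 1 / 2 * (n : ℝ) + 1 / 2 * (n + 2) = n + 1 by ring] at hconv
    simp only [rieszProfile]
    push_cast
    linarith

lemma sum_range_fwdDiff_iter_two_rieszProfile_le (hs1 : 1 ≤ s) (hs2 : s ≤ 2) (n : ℕ) :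
    ∑ d ∈ Finset.range n, Δ_[1] ^[2] (rieszProfile s) d ≤ -Δ_[1] (rieszProfile s) 0 := by
  have htel : ∑ d ∈ Finset.range n, Δ_[1] ^[2] (rieszProfile s) d
      = Δ_[1] (rieszProfile s) n - Δ_[1] (rieszProfile s) 0 :=
    Finset.sum_range_sub (Δ_[1] (rieszProfile s)) n
  linarith [fwdDiff_rieszProfile_nonpos hs1 hs2 n]

end RieszProfile

section Coefficients

variable {ν : ℝ} {N i j m : ℕ}

lemma aCoef_eq_rieszProfile (hm : 1 ≤ m) (hmj : m < j) :
    aCoef ν j m = rieszProfile (3 - ν) (j - m) := by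
  obtain ⟨d, rfl⟩ : ∃ d, j = m + d + 1 := ⟨j - m - 1, by omega⟩
  rw [aCoef, if_neg (by omega), if_neg (by omega), show m + d + 1 - m = d + 1 by omega,
    rieszProfile, fwdDiff_iter_two_apply]
  push_cast
  ring_nf

lemma bCoef_eq_rieszProfile (hjm : j < m) (hmN : m < N) :
    bCoef ν N j m = rieszProfile (3 - ν) (m - j) := by
  obtain ⟨d, rfl⟩ : ∃ d, m = j + d + 1 := ⟨m - j - 1, by omega⟩
  rw [bCoef, if_neg (by omega), if_neg (by omega), show j + d + 1 - j = d + 1 by omega,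
    rieszProfile, fwdDiff_iter_two_apply]
  push_cast
  ring_nf

lemma gCoef_self (hν : ν < 3) (hi : i ∈ Finset.Ioo 0 N) :
    gCoef ν N i i = 2 * Δ_[1] (rieszProfile (3 - ν)) 0 := by
  rw [Finset.mem_Ioo] at hi
  rw [gCoef, pCoef, qCoef, if_neg (lt_irrefl i), if_pos rfl, if_neg (by omega),
    if_neg (by omega), if_pos rfl, aCoef, bCoef, if_pos rfl, if_pos rfl,
    aCoef_eq_rieszProfile (by omega) (by omega), bCoef_eq_rieszProfile (by omega) hi.2,
    show i + 1 - i = 1 by omega, show i - (i - 1) = 1 by omega, fwdDiff, zero_add,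
    rieszProfile_one (by linarith)]
  simp only [rieszProfile]
  ring

lemma gCoef_of_lt (hm : 0 < m) (hmi : m < i) :
    gCoef ν N i m = Δ_[1] ^[2] (rieszProfile (3 - ν)) (i - m - 1) := by
  obtain ⟨d, rfl⟩ : ∃ d, i = m + d + 1 := ⟨i - m - 1, by omega⟩
  rw [gCoef, pCoef, qCoef, if_pos hmi, fwdDiff_iter_two_apply,
    aCoef_eq_rieszProfile (j := m + d + 1) hm hmi,
    aCoef_eq_rieszProfile (j := m + d + 1 + 1) hm (by omega),
    show m + d + 1 - m - 1 = d by omega, show m + d + 1 + 1 - m = d + 1 + 1 by omega,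
    show m + d + 1 - m = d + 1 by omega, show m + d + 1 - 1 = m + d by omega]
  rcases d with _ | d
  · rw [if_neg (by omega), if_pos (by omega), add_zero, aCoef, if_pos rfl, bCoef, if_pos rfl]
    simp only [rieszProfile]
    ring
  · rw [if_pos (by omega), aCoef_eq_rieszProfile hm (by omega),
      show m + (d + 1) - m = d + 1 by omega]
    ring

lemma gCoef_of_gt (hi : 0 < i) (him : i < m) (hmN : m < N) :
    gCoef ν N i m = Δ_[1] ^[2] (rieszProfile (3 - ν)) (m - i - 1) := by
  obtain ⟨d, rfl⟩ : ∃ d, m = i + d + 1 := ⟨m - i - 1, by omega⟩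
  rw [gCoef, pCoef, qCoef, if_neg (show ¬i + d + 1 < i by omega),
    if_neg (show i + d + 1 ≠ i by omega), if_neg (show ¬i + d + 1 + 1 < i by omega),
    if_neg (show i + d + 1 + 1 ≠ i by omega), if_neg (show i + d + 1 ≠ i by omega),
    fwdDiff_iter_two_apply, bCoef_eq_rieszProfile (j := i - 1) (by omega) hmN,
    bCoef_eq_rieszProfile him hmN, show i + d + 1 - i - 1 = d by omega,
    show i + d + 1 - (i - 1) = d + 1 + 1 by omega, show i + d + 1 - i = d + 1 by omega]
  rcases d with _ | d
  · rw [if_pos rfl, aCoef, if_pos rfl, bCoef, if_pos rfl]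
    simp only [rieszProfile]
    ring
  · rw [if_neg (by omega), bCoef_eq_rieszProfile (by omega) hmN,
      show i + (d + 1) + 1 - (i + 1) = d + 1 by omega]
    ring

end Coefficients

section DiagonalDominance

variable {ν : ℝ} {N i m : ℕ}

lemma gCoef_nonneg (hν1 : 1 ≤ ν) (hν2 : ν ≤ 2) (hi : i ∈ Finset.Ioo 0 N)
    (hm : m ∈ (Finset.Ioo 0 N).erase i) : 0 ≤ gCoef ν N i m := by
  simp only [Finset.mem_erase, Finset.mem_Ioo] at hi hm
  rcases lt_or_gt_of_ne hm.1 with hmi | him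
  · rw [gCoef_of_lt hm.2.1 hmi]
    exact fwdDiff_iter_two_rieszProfile_nonneg (by linarith) (by linarith) _
  · rw [gCoef_of_gt hi.1 him hm.2.2]
    exact fwdDiff_iter_two_rieszProfile_nonneg (by linarith) (by linarith) _

lemma sum_gCoef_erase_le (hν1 : 1 ≤ ν) (hν2 : ν ≤ 2) (hi : i ∈ Finset.Ioo 0 N) :
    ∑ m ∈ (Finset.Ioo 0 N).erase i, gCoef ν N i m ≤ -gCoef ν N i i := by
  have hi' := Finset.mem_Ioo.mp hi
  have hsplit : (Finset.Ioo 0 N).erase i = Finset.Ioo 0 i ∪ Finset.Ioo i N := by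
    ext m; simp only [Finset.mem_erase, Finset.mem_Ioo, Finset.mem_union]; omega
  have hleft : ∑ m ∈ Finset.Ioo 0 i, gCoef ν N i m
      = ∑ d ∈ Finset.range (i - 1), Δ_[1] ^[2] (rieszProfile (3 - ν)) d := by
    refine Finset.sum_nbij' (fun m => i - m - 1) (fun d => i - d - 1) ?_ ?_ ?_ ?_ ?_ <;>
      intro m hm <;> simp only [Finset.mem_Ioo, Finset.mem_range] at hm ⊢
    any_goals omega
    exact gCoef_of_lt hm.1 hm.2
  have hright : ∑ m ∈ Finset.Ioo i N, gCoef ν N i m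
      = ∑ d ∈ Finset.range (N - i - 1), Δ_[1] ^[2] (rieszProfile (3 - ν)) d := by
    refine Finset.sum_nbij' (fun m => m - i - 1) (fun d => d + i + 1) ?_ ?_ ?_ ?_ ?_ <;>
      intro m hm <;> simp only [Finset.mem_Ioo, Finset.mem_range] at hm ⊢
    any_goals omega
    exact gCoef_of_gt hi'.1 hm.1 hm.2
  have hdisj : Disjoint (Finset.Ioo 0 i) (Finset.Ioo i N) :=
    Finset.disjoint_left.mpr fun m h1 h2 => by
      simp only [Finset.mem_Ioo] at h1 h2; omega
  rw [hsplit, Finset.sum_union hdisj, hleft, hright, gCoef_self (by linarith) hi]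
  have hs1 : 1 ≤ 3 - ν := by linarith
  have hs2 : 3 - ν ≤ 2 := by linarith
  linarith [sum_range_fwdDiff_iter_two_rieszProfile_le hs1 hs2 (i - 1),
    sum_range_fwdDiff_iter_two_rieszProfile_le hs1 hs2 (N - i - 1)]

end DiagonalDominance

lemma kappa_nonpos {ν : ℝ} (h1 : 1 ≤ ν) (h3 : ν ≤ 3) : kappa ν ≤ 0 := by
  have hcos : Real.cos (ν * Real.pi / 2) ≤ 0 :=
    Real.cos_nonpos_of_pi_div_two_le_of_le (by nlinarith [Real.pi_pos])
      (by nlinarith [Real.pi_pos])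
  exact div_nonpos_of_nonneg_of_nonpos zero_le_one (by linarith)

lemma neg_mul_kappa_mul_div_nonneg {α τ Δx c : ℝ} (hα1 : 1 ≤ α) (hα3 : α ≤ 3) (hτ : 0 ≤ τ)
    (hΔx : 0 ≤ Δx) (hc : 0 ≤ c) : 0 ≤ -(τ * kappa α * c) / (Real.Gamma (4 - α) * Δx ^ α) := by
  refine div_nonneg ?_ <|
    mul_nonneg (Real.Gamma_pos_of_pos (by linarith)).le (Real.rpow_nonneg hΔx α)
  nlinarith [mul_nonneg (mul_nonneg hτ hc) (neg_nonneg.2 (kappa_nonpos hα1 hα3))]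

section MaxAbs

variable {N : ℕ} {v : ℕ → ℝ}

lemma abs_le_maxAbs {i : ℕ} (hi : i ≤ N) : |v i| ≤ maxAbs N v :=
  Finset.le_sup' (fun j => |v j|) (Finset.mem_range.mpr (Nat.lt_succ_of_le hi))

lemma maxAbs_nonneg : 0 ≤ maxAbs N v :=
  (abs_nonneg _).trans (abs_le_maxAbs (Nat.zero_le N))

lemma maxAbs_le {b : ℝ} (h : ∀ i ≤ N, |v i| ≤ b) : maxAbs N v ≤ b :=
  Finset.sup'_le _ _ fun i hi => h i (Nat.le_of_lt_succ (Finset.mem_range.mp hi))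

lemma exists_abs_eq_maxAbs (N : ℕ) (v : ℕ → ℝ) : ∃ i ≤ N, |v i| = maxAbs N v := by
  obtain ⟨i, hi, heq⟩ := Finset.exists_mem_eq_sup' Finset.nonempty_range_add_one fun j => |v j|
  exact ⟨i, Nat.le_of_lt_succ (Finset.mem_range.mp hi), heq.symm⟩

end MaxAbs

lemma abs_le_abs_sub_mul_sum_of_diagDominant {ι : Type*} {s : Finset ι} {g e : ι → ℝ}
    {ω gii ei : ℝ} (hω : 0 ≤ ω) (hg : ∀ m ∈ s, 0 ≤ g m) (hdom : ∑ m ∈ s, g m ≤ -gii)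
    (hmax : ∀ m ∈ s, |e m| ≤ |ei|) :
    |ei| ≤ |(1 - ω * gii) * ei - ω * ∑ m ∈ s, g m * e m| := by
  have hsum : |∑ m ∈ s, g m * e m| ≤ -gii * |ei| :=
    calc |∑ m ∈ s, g m * e m| ≤ ∑ m ∈ s, g m * |ei| := by
          refine (Finset.abs_sum_le_sum_abs _ _).trans (Finset.sum_le_sum fun m hm => ?_)
          rw [abs_mul, abs_of_nonneg (hg m hm)]
          exact mul_le_mul_of_nonneg_left (hmax m hm) (hg m hm)
      _ ≤ -gii * |ei| := by
          rw [← Finset.sum_mul]; exact mul_le_mul_of_nonneg_right hdom (abs_nonneg ei)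
  have hgii : gii ≤ 0 := by linarith [Finset.sum_nonneg hg]
  have hdiag : 0 ≤ 1 - ω * gii := by nlinarith
  calc |ei| = (1 - ω * gii) * |ei| + ω * (gii * |ei|) := by ring
    _ ≤ |(1 - ω * gii) * ei| - ω * |∑ m ∈ s, g m * e m| := by
        rw [abs_mul, abs_of_nonneg hdiag]; nlinarith [mul_le_mul_of_nonneg_left hsum hω]
    _ = |(1 - ω * gii) * ei| - |ω * ∑ m ∈ s, g m * e m| := by rw [abs_mul ω, abs_of_nonneg hω]
    _ ≤ |(1 - ω * gii) * ei - ω * ∑ m ∈ s, g m * e m| := abs_sub_abs_le_abs_sub _ _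

lemma maxAbs_le_add_of_implicitStep {N : ℕ} {g : ℕ → ℕ → ℝ} {ω e e' r : ℕ → ℝ} {ρ : ℝ}
    (hg : ∀ i ∈ Finset.Ioo 0 N, ∀ m ∈ (Finset.Ioo 0 N).erase i, 0 ≤ g i m)
    (hdom : ∀ i ∈ Finset.Ioo 0 N, ∑ m ∈ (Finset.Ioo 0 N).erase i, g i m ≤ -g i i)
    (hω : ∀ i ∈ Finset.Ioo 0 N, 0 ≤ ω i) (he0 : e 0 = 0) (heN : e N = 0) (hρ : 0 ≤ ρ)
    (hr : ∀ i ∈ Finset.Ioo 0 N, |r i| ≤ ρ)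
    (hstep : ∀ i ∈ Finset.Ioo 0 N, (1 - ω i * g i i) * e i
      - ω i * ∑ m ∈ (Finset.range (N + 1)).erase i, g i m * e m = e' i + r i) :
    maxAbs N e ≤ maxAbs N e' + ρ := by
  obtain ⟨i, hiN, hi⟩ := exists_abs_eq_maxAbs N e
  rw [← hi]
  by_cases hint : i ∈ Finset.Ioo 0 N
  · have hsum : ∑ m ∈ (Finset.Ioo 0 N).erase i, g i m * e m
        = ∑ m ∈ (Finset.range (N + 1)).erase i, g i m * e m := by
      refine Finset.sum_subset (fun m hm => ?_) fun m hm hm' => ?_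
      · simp only [Finset.mem_erase, Finset.mem_Ioo, Finset.mem_range] at hm ⊢; omega
      · simp only [Finset.mem_erase, Finset.mem_Ioo, Finset.mem_range] at hm hm'
        obtain rfl | rfl : m = 0 ∨ m = N := by omega
        · rw [he0, mul_zero]
        · rw [heN, mul_zero]
    have hrow := abs_le_abs_sub_mul_sum_of_diagDominant (hω i hint) (hg i hint) (hdom i hint)
      fun m hm => hi ▸ abs_le_maxAbs (Finset.mem_Ioo.mp (Finset.mem_of_mem_erase hm)).2.le
    rw [hsum, hstep i hint] at hrow
    calc |e i| ≤ |e' i| + |r i| := hrow.trans (abs_add_le _ _)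
      _ ≤ maxAbs N e' + ρ := add_le_add (abs_le_maxAbs hiN) (hr i hint)
  · obtain rfl | rfl : i = 0 ∨ i = N := by simp only [Finset.mem_Ioo] at hint; omega
    · rw [he0, abs_zero]; exact add_nonneg maxAbs_nonneg hρ
    · rw [heN, abs_zero]; exact add_nonneg maxAbs_nonneg hρ

lemma le_natCast_mul_of_le_add {x : ℕ → ℝ} {ρ : ℝ} {n : ℕ} (h0 : x 0 ≤ 0)
    (hstep : ∀ k, k + 1 ≤ n → x (k + 1) ≤ x k + ρ) : ∀ k ≤ n, x k ≤ k * ρ := by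
  intro k hk
  induction k with
  | zero => simpa using h0
  | succ k ih =>
    push_cast
    linarith [hstep k hk, ih (by omega)]

theorem implicit_1d_convergence_gamma_one_general (α : ℝ) (hα : α ∈ Set.Ioc (1:ℝ) 2)
    (N Nt : ℕ)
    (τ Δx : ℝ) (hτ : 0 < τ) (hΔx : 0 < Δx)
    (c : ℕ → ℕ → ℝ)
    (hc : ∀ i k : ℕ, 1 ≤ i → i ≤ N - 1 → 1 ≤ k → k ≤ Nt → 0 ≤ c i k)
    (ω : ℕ → ℕ → ℝ)
    (hω : ∀ i k : ℕ, 1 ≤ i → i ≤ N - 1 → 1 ≤ k → k ≤ Nt →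
      ω i k = -(τ * kappa α * c i k) / (Real.Gamma (4 - α) * Δx ^ α))
    (R : ℕ → ℕ → ℝ) (Rmax : ℝ)
    (hRmax : IsGreatest
      {x : ℝ | ∃ i k : ℕ, 1 ≤ i ∧ i ≤ N - 1 ∧ 1 ≤ k ∧ k ≤ Nt ∧ x = |R k i|} Rmax)
    (ε : ℕ → ℕ → ℝ)
    (hinit : ∀ i : ℕ, i ≤ N → ε 0 i = 0)
    (hbc : ∀ k : ℕ, 1 ≤ k → k ≤ Nt → ε k 0 = 0 ∧ ε k N = 0)
    (hscheme : ∀ i k : ℕ, 1 ≤ i → i ≤ N - 1 → k + 1 ≤ Nt →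
      (1 - ω i (k + 1) * gCoef α N i i) * ε (k + 1) i
        - ω i (k + 1) * ∑ m ∈ (Finset.range (N + 1)).erase i, gCoef α N i m * ε (k + 1) m
      = ε k i + R (k + 1) i) :
    (∀ k : ℕ, k ≤ Nt → maxAbs N (ε k) ≤ (k : ℝ) * Rmax) ∧
    (∀ T C : ℝ, 0 < T → (Nt : ℝ) * τ ≤ T → 0 < C →
      (∀ i k : ℕ, 1 ≤ i → i ≤ N - 1 → 1 ≤ k → k ≤ Nt →
        |R k i| ≤ C * τ * (τ + Δx ^ 2)) →
      ∀ k : ℕ, k ≤ Nt → maxAbs N (ε k) ≤ C * T * (τ + Δx ^ 2)) := by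
  obtain ⟨hα1, hα2⟩ := hα
  have hIoo {i : ℕ} (hi : i ∈ Finset.Ioo 0 N) : 1 ≤ i ∧ i ≤ N - 1 := by
    rw [Finset.mem_Ioo] at hi; omega
  obtain ⟨⟨i₀, k₀, hi₀, hi₀N, hk₀, hk₀N, hRmax_eq⟩, hRmax_ge⟩ := hRmax
  have hω_nonneg (i k : ℕ) (hi : i ∈ Finset.Ioo 0 N) (hk : 1 ≤ k) (hkN : k ≤ Nt) :
      0 ≤ ω i k := by
    rw [hω i k (hIoo hi).1 (hIoo hi).2 hk hkN]
    exact neg_mul_kappa_mul_div_nonneg hα1.le (by linarith) hτ.le hΔx.le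
      (hc i k (hIoo hi).1 (hIoo hi).2 hk hkN)
  have hRmax_nonneg : 0 ≤ Rmax := hRmax_eq ▸ abs_nonneg _
  have hbound : ∀ k ≤ Nt, maxAbs N (ε k) ≤ k * Rmax := by
    refine le_natCast_mul_of_le_add (maxAbs_le fun i hi => by simp [hinit i hi]) fun k hk => ?_
    exact maxAbs_le_add_of_implicitStep (fun i hi _ hm => gCoef_nonneg hα1.le hα2 hi hm)
      (fun i hi => sum_gCoef_erase_le hα1.le hα2 hi)
      (fun i hi => hω_nonneg i (k + 1) hi (by omega) hk)
      (hbc (k + 1) (by omega) hk).1 (hbc (k + 1) (by omega) hk).2 hRmax_nonneg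
      (fun i hi => hRmax_ge ⟨i, k + 1, (hIoo hi).1, (hIoo hi).2, by omega, hk, rfl⟩)
      fun i hi => hscheme i k (hIoo hi).1 (hIoo hi).2 hk
  refine ⟨hbound, fun T C _ hT hC hR k hk => ?_⟩
  have hRmax_le : Rmax ≤ C * τ * (τ + Δx ^ 2) := hRmax_eq ▸ hR i₀ k₀ hi₀ hi₀N hk₀ hk₀N
  calc maxAbs N (ε k) ≤ k * Rmax := hbound k hk
    _ ≤ Nt * (C * τ * (τ + Δx ^ 2)) := by gcongr
    _ = C * (Nt * τ) * (τ + Δx ^ 2) := by ring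
    _ ≤ C * T * (τ + Δx ^ 2) := by gcongr

/-- Theorem 4.1 (case `γ = 1`): convergence of the one-dimensional implicit scheme.
Here `ε k i` is the error and `R k i` the local truncation error, with `Rmax` the
maximum of `|R^k_i|`. -/
theorem implicit_1d_convergence_gamma_one (α : ℝ) (hα : α ∈ Set.Ioc (1:ℝ) 2)
    (N Nt : ℕ) (hN : 2 ≤ N) (hNt : 1 ≤ Nt)
    (τ Δx : ℝ) (hτ : 0 < τ) (hΔx : 0 < Δx)
    (c : ℕ → ℕ → ℝ)
    (hc : ∀ i k : ℕ, 1 ≤ i → i ≤ N - 1 → 1 ≤ k → k ≤ Nt → 0 ≤ c i k)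
    (ω : ℕ → ℕ → ℝ)
    (hω : ∀ i k : ℕ, 1 ≤ i → i ≤ N - 1 → 1 ≤ k → k ≤ Nt →
      ω i k = -(τ * kappa α * c i k) / (Real.Gamma (4 - α) * Δx ^ α))
    (R : ℕ → ℕ → ℝ) (Rmax : ℝ)
    (hRmax : IsGreatest
      {x : ℝ | ∃ i k : ℕ, 1 ≤ i ∧ i ≤ N - 1 ∧ 1 ≤ k ∧ k ≤ Nt ∧ x = |R k i|} Rmax)
    (ε : ℕ → ℕ → ℝ)
    (hinit : ∀ i : ℕ, i ≤ N → ε 0 i = 0)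
    (hbc : ∀ k : ℕ, 1 ≤ k → k ≤ Nt → ε k 0 = 0 ∧ ε k N = 0)
    (hscheme : ∀ i k : ℕ, 1 ≤ i → i ≤ N - 1 → k + 1 ≤ Nt →
      (1 - ω i (k + 1) * gCoef α N i i) * ε (k + 1) i
        - ω i (k + 1) * ∑ m ∈ (Finset.range (N + 1)).erase i, gCoef α N i m * ε (k + 1) m
      = ε k i + R (k + 1) i) :
    (∀ k : ℕ, k ≤ Nt → maxAbs N (ε k) ≤ (k : ℝ) * Rmax) ∧
    (∀ T C : ℝ, 0 < T → (Nt : ℝ) * τ ≤ T → 0 < C →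
      (∀ i k : ℕ, 1 ≤ i → i ≤ N - 1 → 1 ≤ k → k ≤ Nt →
        |R k i| ≤ C * τ * (τ + Δx ^ 2)) →
      ∀ k : ℕ, k ≤ Nt → maxAbs N (ε k) ≤ C * T * (τ + Δx ^ 2)) :=
  implicit_1d_convergence_gamma_one_general α hα N Nt τ Δx hτ hΔx c hc ω hω R Rmax hRmax ε hinit hbc
    hscheme
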